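/- Let D be a k-derivation of T with D(E₁₁) = D(E₂₂) = D(E₃₃) = 0, determined by polynomials a, b, c ∈ k[β] via D(E₁₂) = a·E₁₂, D(β·E₂₂) = b·E₂₂, D(E₂₃) = c·E₂₃. Then D maps the ideal I(n; n′, n″; V) into itself (equivalently, D descends to a k-derivation of A = T / I(n; n′, n″; V)) if and only if δ·b(0) = 0 in k and (a + c)·v + b·v′ ∈ V for every v ∈ V. -/

import Mathlib

open Polynomial Matrix

noncomputable section

/-- `Algebra` structure on the quotient of a `k`-algebra by a ring congruence. -/
instance RingConQuotient.algebra (k R : Type*) [CommSemiring k] [Ring R] [Algebra k R]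
    (c : RingCon R) : Algebra k c.Quotient where
  algebraMap := (RingCon.mk' c).comp (algebraMap k R)
  commutes' := by
    intro r x
    induction x using Quotient.ind
    exact congrArg _ (Algebra.commutes r _)
  smul_def' := by
    intro r x
    induction x using Quotient.ind
    exact congrArg _ (Algebra.smul_def r _)

variable (k : Type*) [Field k]

/-- `D` is a `k`-derivation (as a linear endomorphism of a `k`-algebra). -/
def IsDer {R : Type*} [Ring R] [Algebra k R] (D : R →ₗ[k] R) : Prop :=
  ∀ x y : R, D (x * y) = D x * y + x * D y

/-- `D` is an inner derivation. -/
def IsInner {R : Type*} [Ring R] [Algebra k R] (D : R →ₗ[k] R) : Prop :=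
  ∃ a : R, ∀ x : R, D x = a * x - x * a

/-- The ideal `(β^j)` of `k[β]`, as a `k`-submodule. -/
def Bsub (j : ℕ) : Submodule k (Polynomial k) where
  carrier := {p | X ^ j ∣ p}
  zero_mem' := dvd_zero _
  add_mem' := fun h1 h2 => dvd_add h1 h2
  smul_mem' := fun c p hp => by
    simpa [Polynomial.smul_eq_C_mul] using Dvd.dvd.mul_left hp (C c)

lemma mem_Bsub {k : Type*} [Field k] {j : ℕ} {p : Polynomial k} :
    p ∈ Bsub k j ↔ X ^ j ∣ p := Iff.rfl

/-- The algebra `T`: upper triangular 3×3 matrices over `k[β]` whose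
`(1,1)` and `(3,3)` entries are constants. -/
def Tsub : Subalgebra k (Matrix (Fin 3) (Fin 3) (Polynomial k)) where
  carrier := {M | (∀ i j : Fin 3, j < i → M i j = 0) ∧
      (∃ x : k, M 0 0 = C x) ∧ (∃ z : k, M 2 2 = C z)}
  zero_mem' := ⟨fun _ _ _ => rfl, ⟨0, by simp⟩, ⟨0, by simp⟩⟩
  one_mem' := ⟨fun i j h => Matrix.one_apply_ne h.ne', ⟨1, by simp⟩, ⟨1, by simp⟩⟩
  add_mem' := by
    rintro a b ⟨hal, ⟨x, hax⟩, ⟨z, haz⟩⟩ ⟨hbl, ⟨y, hby⟩, ⟨w, hbw⟩⟩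
    refine ⟨fun i j h => by simp [hal i j h, hbl i j h], ⟨x + y, by simp [hax, hby]⟩,
      ⟨z + w, by simp [haz, hbw]⟩⟩
  mul_mem' := by
    rintro a b ⟨hal, ⟨x, hax⟩, ⟨z, haz⟩⟩ ⟨hbl, ⟨y, hby⟩, ⟨w, hbw⟩⟩
    refine ⟨fun i j h => ?_, ⟨x * y, ?_⟩, ⟨z * w, ?_⟩⟩
    · rw [Matrix.mul_apply]
      apply Finset.sum_eq_zero
      intro l _
      rcases lt_or_ge l i with hl | hl
      · rw [hal i l hl, zero_mul]
      · rw [hbl l j (lt_of_lt_of_le h hl), mul_zero]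
    · rw [Matrix.mul_apply, Fin.sum_univ_three,
        hbl 1 0 (by decide), hbl 2 0 (by decide), hax, hby]
      simp
    · rw [Matrix.mul_apply, Fin.sum_univ_three,
        hal 2 0 (by decide), hal 2 1 (by decide), haz, hbw]
      simp
  algebraMap_mem' := by
    intro r
    refine ⟨fun i j h => ?_, ⟨r, ?_⟩, ⟨r, ?_⟩⟩
    · rw [Matrix.algebraMap_matrix_apply, if_neg h.ne']
    · rw [Matrix.algebraMap_matrix_apply, if_pos rfl]; rfl
    · rw [Matrix.algebraMap_matrix_apply, if_pos rfl]; rfl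

/-- The matrix `p·E₁₂` as an element of `T`. -/
def tE12 (p : Polynomial k) : Tsub k :=
  ⟨Matrix.single 0 1 p, by
    refine ⟨fun i j h => ?_, ⟨0, ?_⟩, ⟨0, ?_⟩⟩
    · fin_cases i <;> fin_cases j <;> simp_all [Matrix.single, Matrix.of_apply]
    · simp [Matrix.single, Matrix.of_apply]
    · simp [Matrix.single, Matrix.of_apply]⟩

/-- The matrix `p·E₂₂` as an element of `T`. -/
def tE22 (p : Polynomial k) : Tsub k :=
  ⟨Matrix.single 1 1 p, by
    refine ⟨fun i j h => ?_, ⟨0, ?_⟩, ⟨0, ?_⟩⟩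
    · fin_cases i <;> fin_cases j <;> simp_all [Matrix.single, Matrix.of_apply]
    · simp [Matrix.single, Matrix.of_apply]
    · simp [Matrix.single, Matrix.of_apply]⟩

/-- The matrix `p·E₂₃` as an element of `T`. -/
def tE23 (p : Polynomial k) : Tsub k :=
  ⟨Matrix.single 1 2 p, by
    refine ⟨fun i j h => ?_, ⟨0, ?_⟩, ⟨0, ?_⟩⟩
    · fin_cases i <;> fin_cases j <;> simp_all [Matrix.single, Matrix.of_apply]
    · simp [Matrix.single, Matrix.of_apply]
    · simp [Matrix.single, Matrix.of_apply]⟩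

/-- The matrix `p·E₁₃` as an element of `T`. -/
def tE13 (p : Polynomial k) : Tsub k :=
  ⟨Matrix.single 0 2 p, by
    refine ⟨fun i j h => ?_, ⟨0, ?_⟩, ⟨0, ?_⟩⟩
    · fin_cases i <;> fin_cases j <;> simp_all [Matrix.single, Matrix.of_apply]
    · simp [Matrix.single, Matrix.of_apply]
    · simp [Matrix.single, Matrix.of_apply]⟩

/-- The idempotent `E₁₁` as an element of `T`. -/
def tE11 : Tsub k :=
  ⟨Matrix.single 0 0 1, by
    refine ⟨fun i j h => ?_, ⟨1, ?_⟩, ⟨0, ?_⟩⟩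
    · fin_cases i <;> fin_cases j <;> simp_all [Matrix.single, Matrix.of_apply]
    · simp [Matrix.single, Matrix.of_apply]
    · simp [Matrix.single, Matrix.of_apply]⟩

/-- The idempotent `E₂₂` as an element of `T`. -/
def tE22one : Tsub k := tE22 k 1

/-- The idempotent `E₃₃` as an element of `T`. -/
def tE33 : Tsub k :=
  ⟨Matrix.single 2 2 1, by
    refine ⟨fun i j h => ?_, ⟨0, ?_⟩, ⟨1, ?_⟩⟩
    · fin_cases i <;> fin_cases j <;> simp_all [Matrix.single, Matrix.of_apply]
    · simp [Matrix.single, Matrix.of_apply]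
    · simp [Matrix.single, Matrix.of_apply]⟩

/-- The underlying set of the ideal `I(n; n', n''; V)` of `T`. -/
def Icar (n n' n'' : ℕ) (V : Submodule k (Polynomial k)) : Set (Tsub k) :=
  {M | (M : Matrix (Fin 3) (Fin 3) (Polynomial k)) 0 0 = 0 ∧
       (M : Matrix (Fin 3) (Fin 3) (Polynomial k)) 2 2 = 0 ∧
       X ^ n' ∣ (M : Matrix (Fin 3) (Fin 3) (Polynomial k)) 0 1 ∧
       (M : Matrix (Fin 3) (Fin 3) (Polynomial k)) 0 2 ∈ V ∧
       X ^ n ∣ (M : Matrix (Fin 3) (Fin 3) (Polynomial k)) 1 1 ∧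
       X ^ n'' ∣ (M : Matrix (Fin 3) (Fin 3) (Polynomial k)) 1 2}

variable {k}

lemma Tsub_lower {a : Tsub k} :
    ∀ i j : Fin 3, j < i → (a : Matrix (Fin 3) (Fin 3) (Polynomial k)) i j = 0 := a.2.1

lemma Tsub_00 (a : Tsub k) : ∃ x : k, (a : Matrix (Fin 3) (Fin 3) (Polynomial k)) 0 0 = C x :=
  a.2.2.1

lemma Tsub_22 (a : Tsub k) : ∃ z : k, (a : Matrix (Fin 3) (Fin 3) (Polynomial k)) 2 2 = C z :=
  a.2.2.2

variable (k)

/-- The two-sided ideal `I(n; n', n''; V)` of `T`. -/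
def Itsi (n n' n'' : ℕ) (V : Submodule k (Polynomial k)) (hn' : n' ≤ n) (hn'' : n'' ≤ n)
    (hV : ∀ p : Polynomial k, X ^ min n' n'' ∣ p → p ∈ V) : TwoSidedIdeal (Tsub k) :=
  TwoSidedIdeal.mk' (Icar k n n' n'' V)
    (by
      refine ⟨rfl, rfl, ?_, ?_, ?_, ?_⟩ <;> simp)
    (by
      rintro a b ⟨h1, h2, h3, h4, h5, h6⟩ ⟨g1, g2, g3, g4, g5, g6⟩
      refine ⟨?_, ?_, ?_, ?_, ?_, ?_⟩ <;>
        simp only [AddMemClass.coe_add, Matrix.add_apply]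
      · rw [h1, g1, add_zero]
      · rw [h2, g2, add_zero]
      · exact dvd_add h3 g3
      · exact V.add_mem h4 g4
      · exact dvd_add h5 g5
      · exact dvd_add h6 g6)
    (by
      rintro a ⟨h1, h2, h3, h4, h5, h6⟩
      refine ⟨?_, ?_, ?_, ?_, ?_, ?_⟩ <;>
        simp only [NegMemClass.coe_neg, Matrix.neg_apply]
      · rw [h1, neg_zero]
      · rw [h2, neg_zero]
      · exact dvd_neg.mpr h3
      · exact V.neg_mem h4
      · exact dvd_neg.mpr h5
      · exact dvd_neg.mpr h6)
    (by
      rintro t a ⟨h1, h2, h3, h4, h5, h6⟩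
      have hta : ((t * a : Tsub k) : Matrix (Fin 3) (Fin 3) (Polynomial k)) =
          (t : Matrix (Fin 3) (Fin 3) (Polynomial k)) * a := rfl
      obtain ⟨x, hx⟩ := Tsub_00 t
      refine ⟨?_, ?_, ?_, ?_, ?_, ?_⟩ <;>
        rw [hta, Matrix.mul_apply, Fin.sum_univ_three]
      · rw [h1, Tsub_lower (a := a) 1 0 (by decide), Tsub_lower (a := a) 2 0 (by decide)]
        simp
      · rw [h2, Tsub_lower (a := t) 2 0 (by decide), Tsub_lower (a := t) 2 1 (by decide)]
        simp
      · rw [Tsub_lower (a := a) 2 1 (by decide)]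
        simp only [mul_zero, add_zero]
        exact dvd_add (Dvd.dvd.mul_left h3 _)
          (Dvd.dvd.mul_left ((pow_dvd_pow X hn').trans h5) _)
      · rw [h2]
        simp only [mul_zero, add_zero]
        refine V.add_mem ?_
          (hV _ (Dvd.dvd.mul_left ((pow_dvd_pow X (min_le_right n' n'')).trans h6) _))
        rw [hx]
        have : C x * (a : Matrix (Fin 3) (Fin 3) (Polynomial k)) 0 2 =
            x • (a : Matrix (Fin 3) (Fin 3) (Polynomial k)) 0 2 := by
          rw [Polynomial.smul_eq_C_mul]
        rw [this]
        exact V.smul_mem _ h4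
      · rw [Tsub_lower (a := t) 1 0 (by decide), Tsub_lower (a := a) 2 1 (by decide)]
        simp only [zero_mul, mul_zero, zero_add, add_zero]
        exact Dvd.dvd.mul_left h5 _
      · rw [Tsub_lower (a := t) 1 0 (by decide), h2]
        simp only [zero_mul, mul_zero, zero_add, add_zero]
        exact Dvd.dvd.mul_left h6 _)
    (by
      rintro a t ⟨h1, h2, h3, h4, h5, h6⟩
      have hta : ((a * t : Tsub k) : Matrix (Fin 3) (Fin 3) (Polynomial k)) =
          (a : Matrix (Fin 3) (Fin 3) (Polynomial k)) * t := rfl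
      obtain ⟨z, hz⟩ := Tsub_22 t
      refine ⟨?_, ?_, ?_, ?_, ?_, ?_⟩ <;>
        rw [hta, Matrix.mul_apply, Fin.sum_univ_three]
      · rw [h1, Tsub_lower (a := t) 1 0 (by decide), Tsub_lower (a := t) 2 0 (by decide)]
        simp
      · rw [h2, Tsub_lower (a := a) 2 0 (by decide), Tsub_lower (a := a) 2 1 (by decide)]
        simp
      · rw [h1, Tsub_lower (a := t) 2 1 (by decide)]
        simp only [zero_mul, mul_zero, zero_add, add_zero]
        exact Dvd.dvd.mul_right h3 _
      · rw [h1]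
        simp only [zero_mul, zero_add]
        refine V.add_mem
          (hV _ (Dvd.dvd.mul_right ((pow_dvd_pow X (min_le_left n' n'')).trans h3) _)) ?_
        rw [hz]
        have : (a : Matrix (Fin 3) (Fin 3) (Polynomial k)) 0 2 * C z =
            z • (a : Matrix (Fin 3) (Fin 3) (Polynomial k)) 0 2 := by
          rw [Polynomial.smul_eq_C_mul, mul_comm]
        rw [this]
        exact V.smul_mem _ h4
      · rw [Tsub_lower (a := a) 1 0 (by decide), Tsub_lower (a := t) 2 1 (by decide)]
        simp only [zero_mul, mul_zero, zero_add, add_zero]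
        exact Dvd.dvd.mul_right h5 _
      · rw [Tsub_lower (a := a) 1 0 (by decide)]
        simp only [zero_mul, zero_add]
        exact dvd_add (Dvd.dvd.mul_right ((pow_dvd_pow X hn'').trans h5) _)
          (Dvd.dvd.mul_right h6 _))

/-- The quotient algebra `A = T / I(n; n', n''; V)`. -/
def Aquot (n n' n'' : ℕ) (V : Submodule k (Polynomial k)) (hn' : n' ≤ n) (hn'' : n'' ≤ n)
    (hV : ∀ p : Polynomial k, X ^ min n' n'' ∣ p → p ∈ V) : Type _ :=
  (Itsi k n n' n'' V hn' hn'' hV).ringCon.Quotient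

instance (n n' n'' : ℕ) (V : Submodule k (Polynomial k)) (hn' : n' ≤ n) (hn'' : n'' ≤ n)
    (hV : ∀ p : Polynomial k, X ^ min n' n'' ∣ p → p ∈ V) :
    Ring (Aquot k n n' n'' V hn' hn'' hV) :=
  inferInstanceAs (Ring (Itsi k n n' n'' V hn' hn'' hV).ringCon.Quotient)

instance (n n' n'' : ℕ) (V : Submodule k (Polynomial k)) (hn' : n' ≤ n) (hn'' : n'' ≤ n)
    (hV : ∀ p : Polynomial k, X ^ min n' n'' ∣ p → p ∈ V) :
    Algebra k (Aquot k n n' n'' V hn' hn'' hV) :=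
  inferInstanceAs (Algebra k (Itsi k n n' n'' V hn' hn'' hV).ringCon.Quotient)

/-- The quotient map `T → A`. -/
def Amk (n n' n'' : ℕ) (V : Submodule k (Polynomial k)) (hn' : n' ≤ n) (hn'' : n'' ≤ n)
    (hV : ∀ p : Polynomial k, X ^ min n' n'' ∣ p → p ∈ V) :
    Tsub k →+* Aquot k n n' n'' V hn' hn'' hV :=
  RingCon.mk' (Itsi k n n' n'' V hn' hn'' hV).ringCon


/-! A derivation killing `E₁₁, E₂₂, E₃₃` acts on the non-corner entries of `T` by
`p ↦ a p + b p'`, `(a + c) p + b p'`, `b p'`, `c p + b p'` at positions `(1,2)`, `(1,3)`,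
`(2,2)`, `(2,3)`, by the Leibniz rule applied to `p E₁₂ = E₁₂ · p E₂₂` and its analogues.
An operator `p ↦ a p + b p'` preserves `(β^m)` iff `m · b(0) = 0`: necessity is read off the
coefficient of `β^{m-1}` in `b · (β^m)' = m b β^{m-1}`. The conditions for `m = n, n', n''`
merge into the one for `δ` since the `m` with `m · b(0) = 0` are the multiples of the additive
order of `b(0)`. -/

theorem natCast_gcd_mul_eq_zero_iff {R : Type*} [NonAssocSemiring R] (x : R) (m l : ℕ) :
    (Nat.gcd m l : R) * x = 0 ↔ (m : R) * x = 0 ∧ (l : R) * x = 0 := by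
  simp only [← nsmul_eq_mul, ← addOrderOf_dvd_iff_nsmul_eq_zero, Nat.dvd_gcd_iff]

section DerivationPreservesXPow

variable {R : Type*} [CommRing R]

theorem natCast_mul_eval_zero_eq_zero_of_X_pow_dvd {b : R[X]} {m : ℕ}
    (h : X ^ m ∣ b * derivative (X ^ m)) : (m : R) * b.eval 0 = 0 := by
  cases m with
  | zero => simp
  | succ j =>
    have := X_pow_dvd_iff.mp h j j.lt_succ_self
    rw [derivative_X_pow, ← mul_assoc, Nat.add_sub_cancel, coeff_mul_X_pow', if_pos le_rfl,
      Nat.sub_self, coeff_mul_C, coeff_zero_eq_eval_zero] at this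
    rwa [mul_comm]

theorem X_pow_dvd_mul_derivative {b p : R[X]} {m : ℕ} (hb : (m : R) * b.eval 0 = 0)
    (hp : X ^ m ∣ p) : X ^ m ∣ b * derivative p := by
  cases m with
  | zero => simp
  | succ j =>
    obtain ⟨u, rfl⟩ := hp
    obtain ⟨w, hw⟩ : X ∣ b * C ((j + 1 : ℕ) : R) := by
      rwa [X_dvd_iff, coeff_mul_C, coeff_zero_eq_eval_zero, mul_comm]
    rw [derivative_mul, derivative_X_pow, Nat.add_sub_cancel]
    exact ⟨w * u + b * derivative u, by linear_combination (X ^ j * u) * hw⟩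

theorem forall_X_pow_dvd_mul_derivative_iff (b : R[X]) (m : ℕ) :
    (∀ p, X ^ m ∣ p → X ^ m ∣ b * derivative p) ↔ (m : R) * b.eval 0 = 0 :=
  ⟨fun h => natCast_mul_eval_zero_eq_zero_of_X_pow_dvd (h _ dvd_rfl),
    fun hb _ => X_pow_dvd_mul_derivative hb⟩

theorem forall_X_pow_dvd_mul_add_mul_derivative_iff (a b : R[X]) (m : ℕ) :
    (∀ p, X ^ m ∣ p → X ^ m ∣ a * p + b * derivative p) ↔ (m : R) * b.eval 0 = 0 := by
  rw [← forall_X_pow_dvd_mul_derivative_iff]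
  exact forall₂_congr fun p hp => dvd_add_right (hp.mul_left a)

end DerivationPreservesXPow

section MatrixUnits

variable {k}

@[simp]
lemma coe_tE12 (p : k[X]) : (tE12 k p : Matrix (Fin 3) (Fin 3) k[X]) = single 0 1 p := rfl

@[simp]
lemma coe_tE22 (p : k[X]) : (tE22 k p : Matrix (Fin 3) (Fin 3) k[X]) = single 1 1 p := rfl

@[simp]
lemma coe_tE13 (p : k[X]) : (tE13 k p : Matrix (Fin 3) (Fin 3) k[X]) = single 0 2 p := rfl

@[simp]
lemma coe_tE23 (p : k[X]) : (tE23 k p : Matrix (Fin 3) (Fin 3) k[X]) = single 1 2 p := rfl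

lemma tE12_add (p q : k[X]) : tE12 k (p + q) = tE12 k p + tE12 k q :=
  Subtype.ext (single_add 0 1 p q)

lemma tE13_add (p q : k[X]) : tE13 k (p + q) = tE13 k p + tE13 k q :=
  Subtype.ext (single_add 0 2 p q)

lemma tE22_add (p q : k[X]) : tE22 k (p + q) = tE22 k p + tE22 k q :=
  Subtype.ext (single_add 1 1 p q)

lemma tE23_add (p q : k[X]) : tE23 k (p + q) = tE23 k p + tE23 k q :=
  Subtype.ext (single_add 1 2 p q)

@[simp]
lemma tE22_zero : tE22 k (0 : k[X]) = 0 :=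
  Subtype.ext (single_zero 1 1)

lemma tE22_C (x : k) : tE22 k (C x) = x • tE22one k :=
  Subtype.ext (by simp [tE22one, smul_single, smul_eq_C_mul])

lemma tE22_mul_tE22 (p q : k[X]) : tE22 k p * tE22 k q = tE22 k (p * q) :=
  Subtype.ext (single_mul_single_same (c := p) 1 1 1 q)

lemma tE12_mul_tE22 (p q : k[X]) : tE12 k p * tE22 k q = tE12 k (p * q) :=
  Subtype.ext (single_mul_single_same (c := p) 0 1 1 q)

lemma tE22_mul_tE23 (p q : k[X]) : tE22 k p * tE23 k q = tE23 k (p * q) :=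
  Subtype.ext (single_mul_single_same (c := p) 1 1 2 q)

lemma tE12_mul_tE23 (p q : k[X]) : tE12 k p * tE23 k q = tE13 k (p * q) :=
  Subtype.ext (single_mul_single_same (c := p) 0 1 2 q)

end MatrixUnits

section IdealEntries

variable {k}

-- Subscripts number matrix entries from 1, as in the paper; `Fin 3` indices start at 0.
def tOfEntries (p₁₂ p₁₃ p₂₂ p₂₃ : k[X]) : Tsub k :=
  tE12 k p₁₂ + tE13 k p₁₃ + tE22 k p₂₂ + tE23 k p₂₃

lemma tOfEntries_mem_Icar_iff {n n' n'' : ℕ} {V : Submodule k k[X]} {p₁₂ p₁₃ p₂₂ p₂₃ : k[X]} :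
    tOfEntries p₁₂ p₁₃ p₂₂ p₂₃ ∈ Icar k n n' n'' V ↔
      X ^ n' ∣ p₁₂ ∧ p₁₃ ∈ V ∧ X ^ n ∣ p₂₂ ∧ X ^ n'' ∣ p₂₃ := by
  simp [Icar, tOfEntries]

lemma eq_tOfEntries {x : Tsub k} (h₁₁ : x.1 0 0 = 0) (h₃₃ : x.1 2 2 = 0) :
    x = tOfEntries (x.1 0 1) (x.1 0 2) (x.1 1 1) (x.1 1 2) := by
  have h₂₁ := Tsub_lower (a := x) 1 0 (by decide)
  have h₃₁ := Tsub_lower (a := x) 2 0 (by decide)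
  have h₃₂ := Tsub_lower (a := x) 2 1 (by decide)
  ext i j
  fin_cases i <;> fin_cases j <;> simp [tOfEntries, h₁₁, h₃₃, h₂₁, h₃₁, h₃₂]

end IdealEntries

section NormalizedDerivation

variable {k} {D : Tsub k →ₗ[k] Tsub k} {a b c : k[X]}

lemma apply_tE22 (hD : IsDer k D) (hD2 : D (tE22one k) = 0) (hb : D (tE22 k X) = tE22 k b)
    (p : k[X]) : D (tE22 k p) = tE22 k (b * derivative p) := by
  induction p using Polynomial.induction_on with
  | C x => simp [tE22_C, hD2]
  | add p q hp hq => rw [tE22_add, map_add, hp, hq, ← tE22_add, derivative_add, mul_add]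
  | monomial m x ih =>
    rw [pow_succ, ← mul_assoc, ← tE22_mul_tE22, hD, ih, hb, tE22_mul_tE22, tE22_mul_tE22,
      ← tE22_add]
    congr 1
    simp only [derivative_mul, derivative_X]
    ring

lemma apply_tE12 (hD : IsDer k D) (hD2 : D (tE22one k) = 0) (ha : D (tE12 k 1) = tE12 k a)
    (hb : D (tE22 k X) = tE22 k b) (p : k[X]) :
    D (tE12 k p) = tE12 k (a * p + b * derivative p) := by
  conv_lhs => rw [← one_mul p, ← tE12_mul_tE22]
  rw [hD, ha, apply_tE22 hD hD2 hb, tE12_mul_tE22, tE12_mul_tE22, ← tE12_add]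
  congr 1
  ring

lemma apply_tE23 (hD : IsDer k D) (hD2 : D (tE22one k) = 0) (hb : D (tE22 k X) = tE22 k b)
    (hc : D (tE23 k 1) = tE23 k c) (p : k[X]) :
    D (tE23 k p) = tE23 k (c * p + b * derivative p) := by
  conv_lhs => rw [← mul_one p, ← tE22_mul_tE23]
  rw [hD, hc, apply_tE22 hD hD2 hb, tE22_mul_tE23, tE22_mul_tE23, ← tE23_add]
  congr 1
  ring

lemma apply_tE13 (hD : IsDer k D) (hD2 : D (tE22one k) = 0) (ha : D (tE12 k 1) = tE12 k a)
    (hb : D (tE22 k X) = tE22 k b) (hc : D (tE23 k 1) = tE23 k c) (p : k[X]) :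
    D (tE13 k p) = tE13 k ((a + c) * p + b * derivative p) := by
  conv_lhs => rw [← mul_one p, ← tE12_mul_tE23]
  rw [hD, hc, apply_tE12 hD hD2 ha hb, tE12_mul_tE23, tE12_mul_tE23, ← tE13_add]
  congr 1
  ring

lemma apply_tOfEntries (hD : IsDer k D) (hD2 : D (tE22one k) = 0)
    (ha : D (tE12 k 1) = tE12 k a) (hb : D (tE22 k X) = tE22 k b)
    (hc : D (tE23 k 1) = tE23 k c) (p₁₂ p₁₃ p₂₂ p₂₃ : k[X]) :
    D (tOfEntries p₁₂ p₁₃ p₂₂ p₂₃) =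
      tOfEntries (a * p₁₂ + b * derivative p₁₂) ((a + c) * p₁₃ + b * derivative p₁₃)
        (b * derivative p₂₂) (c * p₂₃ + b * derivative p₂₃) := by
  simp only [tOfEntries, map_add, apply_tE12 hD hD2 ha hb, apply_tE22 hD hD2 hb,
    apply_tE13 hD hD2 ha hb hc, apply_tE23 hD hD2 hb hc]

lemma forall_mem_Icar_apply_mem_iff (hD : IsDer k D) (hD2 : D (tE22one k) = 0)
    (ha : D (tE12 k 1) = tE12 k a) (hb : D (tE22 k X) = tE22 k b)
    (hc : D (tE23 k 1) = tE23 k c) (n n' n'' : ℕ) (V : Submodule k k[X]) :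
    (∀ x ∈ Icar k n n' n'' V, D x ∈ Icar k n n' n'' V) ↔
      (∀ p, X ^ n' ∣ p → X ^ n' ∣ a * p + b * derivative p) ∧
      (∀ v ∈ V, (a + c) * v + b * derivative v ∈ V) ∧
      (∀ p, X ^ n ∣ p → X ^ n ∣ b * derivative p) ∧
      (∀ p, X ^ n'' ∣ p → X ^ n'' ∣ c * p + b * derivative p) := by
  have hDx := apply_tOfEntries hD hD2 ha hb hc
  constructor
  · intro H
    refine ⟨fun p hp => ?_, fun v hv => ?_, fun p hp => ?_, fun p hp => ?_⟩
    · simpa [hDx, tOfEntries_mem_Icar_iff] using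
        H (tOfEntries p 0 0 0) (by simp [tOfEntries_mem_Icar_iff, hp])
    · simpa [hDx, tOfEntries_mem_Icar_iff] using
        H (tOfEntries 0 v 0 0) (by simp [tOfEntries_mem_Icar_iff, hv])
    · simpa [hDx, tOfEntries_mem_Icar_iff] using
        H (tOfEntries 0 0 p 0) (by simp [tOfEntries_mem_Icar_iff, hp])
    · simpa [hDx, tOfEntries_mem_Icar_iff] using
        H (tOfEntries 0 0 0 p) (by simp [tOfEntries_mem_Icar_iff, hp])
  · rintro ⟨H₁₂, H₁₃, H₂₂, H₂₃⟩ x ⟨h₁₁, h₃₃, h₁₂, h₁₃, h₂₂, h₂₃⟩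
    rw [eq_tOfEntries h₁₁ h₃₃, hDx, tOfEntries_mem_Icar_iff]
    exact ⟨H₁₂ _ h₁₂, H₁₃ _ h₁₃, H₂₂ _ h₂₂, H₂₃ _ h₂₃⟩

end NormalizedDerivation

theorem stmt5 (n n' n'' : ℕ) (V : Submodule k (Polynomial k))
    (D : Tsub k →ₗ[k] Tsub k) (hD : IsDer k D) (hD2 : D (tE22one k) = 0)
    (a b c : Polynomial k)
    (ha : D (tE12 k 1) = tE12 k a) (hb : D (tE22 k X) = tE22 k b)
    (hc : D (tE23 k 1) = tE23 k c) :
    (∀ x ∈ Icar k n n' n'' V, D x ∈ Icar k n n' n'' V) ↔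
      ((Nat.gcd n (Nat.gcd n' n'') : k) * b.eval 0 = 0 ∧
        ∀ v ∈ V, (a + c) * v + b * derivative v ∈ V) := by
  rw [forall_mem_Icar_apply_mem_iff hD hD2 ha hb hc, forall_X_pow_dvd_mul_add_mul_derivative_iff,
    forall_X_pow_dvd_mul_derivative_iff, forall_X_pow_dvd_mul_add_mul_derivative_iff,
    natCast_gcd_mul_eq_zero_iff, natCast_gcd_mul_eq_zero_iff]
  tauto

end
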